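/- Let Ω ⊂ ℂⁿ, n ≥ 2, be a bounded domain, q ∈ ∂Ω, and suppose there exists a neighbourhood 𝒪 of q such that 𝒪 ∩ Ω is log-type convex. Then 𝒪 ∩ Ω is a Goldilocks domain; that is: (1) for some (hence any) ε > 0, ∫₀^ε M_{𝒪∩Ω}(r)/r dr < ∞, where M_{𝒪∩Ω}(r) := sup{1/k_{𝒪∩Ω}(w;v) : δ_{𝒪∩Ω}(w) ≤ r, ‖v‖ = 1}; and (2) for each w₀ ∈ 𝒪 ∩ Ω there exist constants α, β > 0 (depending on w₀) such that K_{𝒪∩Ω}(w, w₀) ≤ α + β log(1/δ_{𝒪∩Ω}(w)) for all w ∈ 𝒪 ∩ Ω. -/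

import Mathlib

/-
Common definitions for formalizing results from
"Local continuous extension of proper holomorphic maps: low-regularity and
infinite-type boundaries" (A. Banik).
-/

open Metric Set Filter MeasureTheory
open scoped Real ENNReal ComplexInnerProductSpace Topology

noncomputable section

namespace Paper

/-- `ℂⁿ` with the Euclidean (Hermitian) norm. -/
abbrev Cn (n : ℕ) := EuclideanSpace ℂ (Fin n)

variable {E : Type*} [NormedAddCommGroup E] [InnerProductSpace ℂ E]

/-- `δ_D(z)`: the Euclidean distance from `z` to the complement of `D`. -/
def delta (D : Set E) (z : E) : ℝ := Metric.infDist z Dᶜ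

/-- The Kobayashi pseudometric `k_D(z; v)` of `D`. -/
def kobMetric (D : Set E) (z v : E) : ℝ :=
  sInf {r : ℝ | ∃ α : ℂ, r = ‖α‖ ∧ ∃ f : ℂ → E,
    DifferentiableOn ℂ f (ball (0 : ℂ) 1) ∧ MapsTo f (ball (0 : ℂ) 1) D ∧
    f 0 = z ∧ α • deriv f 0 = v}

/-- The Poincaré distance on the unit disc between `0` and `σ ∈ [0,1)`,
`ρ(0,σ) = (1/2) log((1+σ)/(1-σ))`. -/
def poincare (σ : ℝ) : ℝ := (1 / 2) * Real.log ((1 + σ) / (1 - σ))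

/-- The Lempert function of `D`. -/
def lempert (D : Set E) (z w : E) : ℝ :=
  sInf {r : ℝ | ∃ σ : ℝ, 0 ≤ σ ∧ σ < 1 ∧ r = poincare σ ∧ ∃ f : ℂ → E,
    DifferentiableOn ℂ f (ball (0 : ℂ) 1) ∧ MapsTo f (ball (0 : ℂ) 1) D ∧
    f 0 = z ∧ f (σ : ℂ) = w}

/-- The Kobayashi pseudodistance `K_D`, defined via chains of analytic discs. -/
def kobDist (D : Set E) (z w : E) : ℝ :=
  sInf {r : ℝ | ∃ m : ℕ, ∃ c : ℕ → E, c 0 = z ∧ c m = w ∧ (∀ i, i ≤ m → c i ∈ D) ∧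
    r = ∑ i ∈ Finset.range m, lempert D (c i) (c (i + 1))}

/-- A real-valued function is plurisubharmonic on `D` if it is upper semicontinuous on `D`
and satisfies the sub-mean-value inequality on every circle, in every complex line,
whose corresponding closed disc lies in `D`. -/
def PlurisubharmonicOn (u : E → ℝ) (D : Set E) : Prop :=
  UpperSemicontinuousOn u D ∧
  ∀ z ∈ D, ∀ v : E, ∀ r : ℝ, 0 < r →
    (∀ ζ : ℂ, ‖ζ‖ ≤ r → z + ζ • v ∈ D) →
    u z ≤ (2 * π)⁻¹ *
      ∫ θ in (0 : ℝ)..(2 * π), u (z + ((r : ℂ) * Complex.exp ((θ : ℂ) * Complex.I)) • v)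

/-- The open right circular cone `Γ(v, θ)` with aperture `θ`, for a unit vector `v`. -/
def cone (v : E) (θ : ℝ) : Set E := {z | Real.cos (θ / 2) * ‖z‖ < ⟪z, v⟫.re}

/-- `D` satisfies a uniform interior cone condition in `W`. -/
def UnifIntCone (D W : Set E) : Prop :=
  ∀ 𝒰 : Set E, IsOpen 𝒰 → 𝒰 ⊆ D → IsCompact (closure 𝒰) → closure 𝒰 ⊆ W →
    ∃ r : ℝ, 0 < r ∧ ∃ θ : ℝ, 0 < θ ∧ θ < π ∧
      ∀ w ∈ 𝒰, ∃ ξ ∈ frontier D ∩ W, ∃ v : E, ‖v‖ = 1 ∧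
        (∃ t : ℝ, 0 < t ∧ w = ξ + t • v) ∧
        w ∈ ((ξ + ·) '' cone v θ) ∩ ball ξ r ∧
        ((ξ + ·) '' cone v θ) ∩ ball ξ r ⊆ W ∩ D

/-- `ω : [0,∞) → [0,∞)`, `ω(0) = 0`, satisfies a Dini condition. -/
def DiniFunction (ω : ℝ → ℝ) : Prop :=
  ω 0 = 0 ∧ (∀ r : ℝ, 0 ≤ r → 0 ≤ ω r) ∧ MonotoneOn ω (Ici 0) ∧
  ∃ ε : ℝ, 0 < ε ∧ IntegrableOn (fun r => ω r / r) (Ioo 0 ε)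

/-- The cluster set `C(F, p)` of `F : D → ℂⁿ` at `p`. -/
def clusterSet (F : E → E) (D : Set E) (p : E) : Set E :=
  {w | ∃ z : ℕ → E, (∀ k, z k ∈ D) ∧ Tendsto z atTop (𝓝 p) ∧ Tendsto (F ∘ z) atTop (𝓝 w)}

/-- `F : D → Ω` is a proper map. -/
def ProperOn (F : E → E) (D Ω : Set E) : Prop :=
  ∀ K : Set E, K ⊆ Ω → IsCompact K → IsCompact (F ⁻¹' K ∩ D)

/-- `δ_Ω(z; v)`: the radius of the largest disc, centred at `z` in the direction `v`,
contained in `Ω`. -/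
def dirDist (Ω : Set E) (z v : E) : ℝ :=
  sSup {r : ℝ | 0 < r ∧ ∀ ζ : ℂ, ‖ζ‖ < r → z + ζ • (‖v‖⁻¹ • v) ∈ Ω}

/-- A bounded convex domain is log-type convex (Liu–Wang). -/
def LogTypeConvex (M : Set E) : Prop :=
  Bornology.IsBounded M ∧ Convex ℝ M ∧ M.Nonempty ∧
  ∃ C : ℝ, 0 < C ∧ ∃ ν : ℝ, 0 < ν ∧ ∀ z ∈ M, ∀ v : E, v ≠ 0 →
    dirDist M z v ≤ C / |Real.log (delta M z)| ^ (1 + ν)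

/-- `η` is the unit inward normal to `∂D` at `ξ`, characterized metrically:
`δ_D(ξ + tη)/t → 1` as `t → 0⁺`. -/
def IsInwardNormalAt (D : Set E) (ξ η : E) : Prop :=
  ‖η‖ = 1 ∧ Tendsto (fun t : ℝ => delta D (ξ + t • η) / t) (𝓝[>] 0) (𝓝 1)

/-- The first `n` coordinates `Z′` of `Z ∈ ℂ^{n+1}`. -/
def sliceCoord {n : ℕ} (Z : Cn (n + 1)) : Cn n := WithLp.toLp 2 (fun i : Fin n => Z i.castSucc)

/-- The last coordinate `Z_n` of `Z ∈ ℂ^{n+1}`. -/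
def lastCoord {n : ℕ} (Z : Cn (n + 1)) : ℂ := Z (Fin.last n)

/-- The parameter box `B^{n-1}(0, r) × (-r, r)` on which the graphing functions live. -/
def box (n : ℕ) (r : ℝ) : Set (Cn n × ℝ) := ball (0 : Cn n) r ×ˢ Ioo (-r) r

/-- The Euclidean norm on `ℂⁿ × ℝ`. -/
def pnorm {n : ℕ} (x : Cn n × ℝ) : ℝ := Real.sqrt (‖x.1‖ ^ 2 + x.2 ^ 2)

/-- `{(Z', Z_n) : Im Z_n > φ(Z', Re Z_n), ‖Z'‖ < r, |Re Z_n| < r}`. -/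
def graphDom {n : ℕ} (φ : Cn n × ℝ → ℝ) (r : ℝ) : Set (Cn (n + 1)) :=
  {Z | φ (sliceCoord Z, (lastCoord Z).re) < (lastCoord Z).im ∧
       ‖sliceCoord Z‖ < r ∧ |(lastCoord Z).re| < r}

/-- `{(Z', Z_n) : Im Z_n = φ(Z', Re Z_n), ‖Z'‖ < r, |Re Z_n| < r}`. -/
def graphBd {n : ℕ} (φ : Cn n × ℝ → ℝ) (r : ℝ) : Set (Cn (n + 1)) :=
  {Z | (lastCoord Z).im = φ (sliceCoord Z, (lastCoord Z).re) ∧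
       ‖sliceCoord Z‖ < r ∧ |(lastCoord Z).re| < r}

/-- The graphing data `(N_ξ, U^ξ, r_ξ, φ_ξ)` at a boundary point `ξ`:
`U^ξ(z) = U_ξ(z - ξ)` with `U_ξ` unitary, and the local graph description of `D` and `∂D`. -/
def IsGraphChartAt {n : ℕ} (D : Set (Cn (n + 1))) (ξ : Cn (n + 1)) (N : Set (Cn (n + 1)))
    (Uu : Cn (n + 1) ≃ₗᵢ[ℂ] Cn (n + 1)) (r : ℝ) (φ : Cn n × ℝ → ℝ) : Prop :=
  IsOpen N ∧ ξ ∈ N ∧ 0 < r ∧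
  (fun z => Uu (z - ξ)) '' (N ∩ D) ⊆ graphDom φ r ∧
  (fun z => Uu (z - ξ)) '' (N ∩ frontier D) = graphBd φ r

/-- `φ` is Lipschitz on the box `B^{n-1}(0, r) × (-r, r)`. -/
def LipOnBox {n : ℕ} (φ : Cn n × ℝ → ℝ) (r : ℝ) : Prop :=
  ∃ K : ℝ, ∀ x ∈ box n r, ∀ y ∈ box n r, |φ x - φ y| ≤ K * pnorm (x - y)

/-- `φ` is `C¹` on the box with modulus of continuity `ω` for its gradient. -/
def C1ModOnBox {n : ℕ} (φ : Cn n × ℝ → ℝ) (r : ℝ) (ω : ℝ → ℝ) : Prop :=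
  (∀ x ∈ box n r, DifferentiableAt ℝ φ x) ∧
  ∀ x ∈ box n r, ∀ y ∈ box n r, ‖fderiv ℝ φ x - fderiv ℝ φ y‖ ≤ ω (pnorm (x - y))

/-- `∂D ∩ U` is a Lipschitz submanifold of `U`. -/
def IsLipschitzSubmanifold {n : ℕ} (D U : Set (Cn (n + 1))) : Prop :=
  ∀ ξ ∈ frontier D ∩ U, ∃ N Uu r φ,
    N ⊆ U ∧ IsGraphChartAt D ξ N Uu r φ ∧ LipOnBox φ r

/-- `∂D ∩ U` is a `C^{1,Dini}` submanifold of `U`. -/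
def IsC1DiniSubmanifold {n : ℕ} (D U : Set (Cn (n + 1))) : Prop :=
  ∃ ω : ℝ → ℝ, DiniFunction ω ∧
    ∀ ξ ∈ frontier D ∩ U, ∃ N Uu r φ,
      N ⊆ U ∧ IsGraphChartAt D ξ N Uu r φ ∧ C1ModOnBox φ r ω

/-- `∂D ∩ U` is a `C¹` submanifold of `U`. -/
def IsC1Submanifold {n : ℕ} (D U : Set (Cn (n + 1))) : Prop :=
  ∀ ξ ∈ frontier D ∩ U, ∃ N Uu r φ,
    N ⊆ U ∧ IsGraphChartAt D ξ N Uu r φ ∧ ContDiffOn ℝ 1 φ (box n r)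

/-- `∂D ∩ U` is a `C²` submanifold of `U`. -/
def IsC2Submanifold {n : ℕ} (D U : Set (Cn (n + 1))) : Prop :=
  ∀ ξ ∈ frontier D ∩ U, ∃ N Uu r φ,
    N ⊆ U ∧ IsGraphChartAt D ξ N Uu r φ ∧ ContDiffOn ℝ 2 φ (box n r)

/-- A `(1, κ)`-almost-geodesic for the Kobayashi distance of `M`. -/
def IsAlmostGeodesic (M : Set E) (κ a b : ℝ) (γ : ℝ → E) : Prop :=
  a ≤ b ∧ ContinuousOn γ (Icc a b) ∧ MapsTo γ (Icc a b) M ∧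
  ∀ s ∈ Icc a b, ∀ t ∈ Icc a b,
    |s - t| - κ ≤ kobDist M (γ s) (γ t) ∧ kobDist M (γ s) (γ t) ≤ |s - t| + κ

/-- The visibility property (Bracci–Nikolov–Thomas). -/
def VisibilityProperty (M : Set E) : Prop :=
  ∃ κ : ℝ, 0 < κ ∧ ∀ ξ ∈ frontier M, ∀ η ∈ frontier M, ξ ≠ η →
    ∀ Vξ Vη : Set E, IsOpen Vξ → IsOpen Vη → ξ ∈ Vξ → η ∈ Vη →
      Disjoint (closure Vξ) (closure Vη) →
      ∃ K : Set E, IsCompact K ∧ K ⊆ M ∧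
        ∀ a b : ℝ, ∀ γ : ℝ → E, IsAlmostGeodesic M κ a b γ →
          γ a ∈ Vξ ∩ M → γ b ∈ Vη ∩ M → ∃ t ∈ Icc a b, γ t ∈ K

/-- A model domain `𝒟 ⊂ ℂ`: a bounded open subset of the right half-plane, symmetric
about `ℝ`, bounded by a Jordan curve through `0`, whose normalized Riemann map `g` onto
`𝔻` (with `g(𝒟 ∩ ℝ) = (-1,1)` and `g(0) = 1`) satisfies
`lim_{𝒟 ∋ ζ → 0} (g(ζ) - 1)/ζ` exists and is nonzero. -/
def ModelDomain (𝒟 : Set ℂ) : Prop :=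
  IsOpen 𝒟 ∧ Bornology.IsBounded 𝒟 ∧ 𝒟.Nonempty ∧
  (∀ ζ ∈ 𝒟, 0 < ζ.re) ∧
  (∀ ζ : ℂ, ζ ∈ 𝒟 ↔ (starRingEnd ℂ) ζ ∈ 𝒟) ∧
  (0 : ℂ) ∈ frontier 𝒟 ∧
  (∃ γ : AddCircle (1 : ℝ) → ℂ, Continuous γ ∧ Function.Injective γ ∧
     range γ = frontier 𝒟) ∧
  ∃ g : ℂ → ℂ, DifferentiableOn ℂ g 𝒟 ∧ BijOn g 𝒟 (ball (0 : ℂ) 1) ∧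
    g '' (𝒟 ∩ {ζ : ℂ | ζ.im = 0}) = {ζ : ℂ | ζ.im = 0 ∧ -1 < ζ.re ∧ ζ.re < 1} ∧
    ContinuousOn g (𝒟 ∪ {0}) ∧ g 0 = 1 ∧
    ∃ L : ℂ, L ≠ 0 ∧ Tendsto (fun ζ => (g ζ - 1) / ζ) (𝓝[𝒟] 0) (𝓝 L)

/-- The set whose supremum defines `M_Ω(r)` in the definition of a Goldilocks domain. -/
def goldiSet (M : Set E) (r : ℝ) : Set ℝ :=
  {t : ℝ | ∃ w ∈ M, ∃ v : E, delta M w ≤ r ∧ ‖v‖ = 1 ∧ t = (kobMetric M w v)⁻¹}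

/-- The Laplacian of a function `g : ℂ → ℝ` (so that `Δg = 4 ∂²g/∂w∂w̄`). -/
def laplacian2 (g : ℂ → ℝ) (w : ℂ) : ℝ :=
  fderiv ℝ (fun z => fderiv ℝ g z 1) w 1 + fderiv ℝ (fun z => fderiv ℝ g z Complex.I) w Complex.I

/-
Let `M = 𝒪 ∩ Ω`.
(1) Separating `M` by a real hyperplane from a boundary point `w + ζ v` and applying the Schwarz
lemma in the resulting half-plane gives `1 / k_M(w; v) ≤ 2 δ_M(w; v)`. Log-type convexity then
bounds `M_M(r)` by `2C / |log r| ^ (1 + ν)`, and `1 / (r |log r| ^ (1 + ν))` is integrable near `0`.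
(2) `δ_M` is concave on `M`, so it grows at least linearly along the segment from `w` to `w₀`.
A chain of points on that segment, each within half the boundary distance of its predecessor and
with geometrically growing steps, reaches `w₀` after `O(log (1 / δ_M(w)))` steps, each of Kobayashi
length at most `ρ(0, 1/2)`.
-/

section Delta

variable {F : Type*} [NormedAddCommGroup F] {M : Set F}

lemma delta_nonneg (z : F) : 0 ≤ delta M z := infDist_nonneg

lemma mem_of_norm_sub_lt_delta {z y : F} (h : ‖y - z‖ < delta M z) : y ∈ M :=
  ball_infDist_compl_subset (by rwa [mem_ball, dist_eq_norm])

lemma delta_pos (hMo : IsOpen M) (hMc : Mᶜ.Nonempty) {z : F} (hz : z ∈ M) : 0 < delta M z :=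
  (hMo.isClosed_compl.notMem_iff_infDist_pos hMc).1 (not_not.2 hz)

lemma delta_le_delta_add_norm_sub (z w : F) : delta M w ≤ delta M z + ‖w - z‖ := by
  simpa only [delta, dist_eq_norm] using infDist_le_infDist_add_dist (x := w) (y := z) (s := Mᶜ)

variable [NormedSpace ℝ F]

lemma add_smul_mem_of_norm_lt {S : ℝ} {u : F} (hu : ‖u‖ < S) {z : F} (hz : z ∈ M) :
    z + (delta M z / S) • u ∈ M := by
  rcases (delta_nonneg (M := M) z).eq_or_lt with h0 | hpos
  · simpa [← h0] using hz
  have hS : 0 < S := (norm_nonneg u).trans_lt hu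
  refine mem_of_norm_sub_lt_delta (z := z) ?_
  rw [add_sub_cancel_left, norm_smul, Real.norm_of_nonneg (by positivity)]
  calc delta M z / S * ‖u‖ < delta M z / S * S := by gcongr
    _ = delta M z := div_mul_cancel₀ _ hS.ne'

/-- Translating the two balls `B(a, δ a)`, `B(b, δ b)` by proportional amounts, convexity puts
the ball of radius `s δ a + t δ b` about `s a + t b` inside `M`. -/
lemma concaveOn_delta (hM : Convex ℝ M) : ConcaveOn ℝ M (delta M) := by
  refine ⟨hM, fun a ha b hb s t hs ht hst => ?_⟩
  rcases Mᶜ.eq_empty_or_nonempty with hc | hc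
  · simp [delta, hc]
  refine (le_infDist hc).2 fun y hy => ?_
  by_contra! hlt
  set S := s • delta M a + t • delta M b
  have hS : 0 < S := dist_nonneg.trans_lt hlt
  set u := y - (s • a + t • b)
  have hu : ‖u‖ < S := by rwa [← dist_eq_norm, dist_comm]
  have hcoef : s * (delta M a / S) + t * (delta M b / S) = 1 := by
    simp only [S, smul_eq_mul] at hS ⊢
    field_simp
  have hy_eq : y = s • (a + (delta M a / S) • u) + t • (b + (delta M b / S) • u) := by
    linear_combination (norm := module) (-hcoef) • u
  exact hy (hy_eq ▸ hM (add_smul_mem_of_norm_lt hu ha) (add_smul_mem_of_norm_lt hu hb) hs ht hst)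

end Delta

lemma poincare_le_poincare {σ τ : ℝ} (hσ : 0 ≤ σ) (hστ : σ ≤ τ) (hτ : τ < 1) :
    poincare σ ≤ poincare τ := by
  unfold poincare
  gcongr
  · exact div_pos (by linarith) (by linarith)
  · linarith

lemma poincare_nonneg {σ : ℝ} (hσ : 0 ≤ σ) (hσ1 : σ < 1) : 0 ≤ poincare σ := by
  simpa [poincare] using poincare_le_poincare le_rfl hσ hσ1

lemma poincare_half_pos : 0 < poincare (1 / 2) :=
  mul_pos one_half_pos (Real.log_pos (by norm_num))

lemma lempert_nonneg (D : Set E) (z w : E) : 0 ≤ lempert D z w :=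
  Real.sInf_nonneg fun _ ⟨_, hσ, hσ1, hr, _⟩ => hr ▸ poincare_nonneg hσ hσ1

/-- The witness is the affine disc `ζ ↦ z + ζ • u` with `‖u‖ ≤ δ_D(z)` and `σ • u = w - z`. -/
lemma lempert_le_poincare {D : Set E} {z w : E} (h : ‖w - z‖ < delta D z) :
    lempert D z w ≤ poincare (‖w - z‖ / delta D z) := by
  have hδ : 0 < delta D z := (norm_nonneg _).trans_lt h
  set σ := ‖w - z‖ / delta D z
  have hσ0 : 0 ≤ σ := by positivity
  have hσ1 : σ < 1 := (div_lt_one hδ).2 h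
  set u : E := σ⁻¹ • (w - z)
  have hu : ‖u‖ ≤ delta D z := by
    rw [norm_smul, Real.norm_of_nonneg (inv_nonneg.2 hσ0), inv_div]
    rcases (norm_nonneg (w - z)).eq_or_lt with h0 | h0
    · simp [← h0, hδ.le]
    · rw [div_mul_cancel₀ _ h0.ne']
  have hσu : (σ : ℂ) • u = w - z := by
    rcases eq_or_ne σ 0 with h0 | h0
    · have : w - z = 0 := by simpa [σ, hδ.ne', norm_eq_zero] using h0
      simp [u, this]
    · rw [Complex.coe_smul, smul_inv_smul₀ h0]
  refine csInf_le ⟨0, fun _ ⟨_, hσ, hσ1, hr, _⟩ => hr ▸ poincare_nonneg hσ hσ1⟩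
    ⟨σ, hσ0, hσ1, rfl, fun ζ => z + ζ • u, ?_, fun ζ hζ => ?_, by simp, by simp [hσu]⟩
  · fun_prop
  · refine mem_of_norm_sub_lt_delta (z := z) ?_
    rw [add_sub_cancel_left, norm_smul]
    calc ‖ζ‖ * ‖u‖ ≤ ‖ζ‖ * delta D z := by gcongr
      _ < 1 * delta D z := by gcongr; simpa using hζ
      _ = delta D z := one_mul _

lemma kobDist_le_sum_lempert {D : Set E} {c : ℕ → E} {m : ℕ} (hc : ∀ i ≤ m, c i ∈ D) :
    kobDist D (c 0) (c m) ≤ ∑ i ∈ Finset.range m, lempert D (c i) (c (i + 1)) :=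
  csInf_le ⟨0, fun _ ⟨_, _, _, _, _, hr⟩ => hr ▸ Finset.sum_nonneg fun _ _ => lempert_nonneg ..⟩
    ⟨m, c, rfl, rfl, hc, rfl⟩

lemma kobDist_le_of_chain {D : Set E} {c : ℕ → E} {m : ℕ} (hc : ∀ i ≤ m, c i ∈ D)
    (hδ : ∀ i < m, 0 < delta D (c i)) (hstep : ∀ i < m, ‖c (i + 1) - c i‖ ≤ delta D (c i) / 2) :
    kobDist D (c 0) (c m) ≤ m * poincare (1 / 2) := by
  refine (kobDist_le_sum_lempert hc).trans ?_
  have hlempert : ∀ i ∈ Finset.range m, lempert D (c i) (c (i + 1)) ≤ poincare (1 / 2) := by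
    intro i hi
    have hδi := hδ i (Finset.mem_range.1 hi)
    have hstepi := hstep i (Finset.mem_range.1 hi)
    refine (lempert_le_poincare (by linarith)).trans
      (poincare_le_poincare (by positivity) ?_ (by norm_num))
    rw [div_le_iff₀ hδi]
    linarith
  simpa using Finset.sum_le_sum hlempert

/-- The partition is `t i = min 1 (a ((1 + ρ) ^ i - 1))`. -/
lemma exists_geometric_partition {a ρ : ℝ} (ha : 0 < a) (ha1 : a ≤ 1) (hρ : 0 < ρ) :
    ∃ m : ℕ, (m : ℝ) ≤ Real.log (2 / a) / Real.log (1 + ρ) + 1 ∧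
      ∃ t : ℕ → ℝ, t 0 = 0 ∧ t m = 1 ∧ Monotone t ∧ (∀ i, 0 ≤ t i ∧ t i ≤ 1) ∧
        ∀ i, t (i + 1) - t i ≤ ρ * (t i + a) := by
  set x : ℕ → ℝ := fun i => a * ((1 + ρ) ^ i - 1)
  have hx_mono : Monotone x := fun i j hij => by
    have := pow_le_pow_right₀ (by linarith : (1 : ℝ) ≤ 1 + ρ) hij
    simp only [x]
    gcongr
  have hx_succ : ∀ i, x (i + 1) = x i + ρ * (x i + a) := fun i => by
    simp only [x]
    ring
  have hlogρ : 0 < Real.log (1 + ρ) := Real.log_pos (by linarith)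
  have h2a : 2 ≤ 2 / a := by rw [le_div_iff₀ ha]; linarith
  set m := ⌈Real.log (2 / a) / Real.log (1 + ρ)⌉₊
  have hm_pow : 2 / a ≤ (1 + ρ) ^ m := by
    have hm := Nat.le_ceil (Real.log (2 / a) / Real.log (1 + ρ))
    rw [div_le_iff₀ hlogρ, ← Real.log_pow] at hm
    exact (Real.log_le_log_iff (by positivity) (by positivity)).1 hm
  have hxm : 1 ≤ x m := by
    have : 2 - a ≤ x m := by
      calc 2 - a = a * (2 / a - 1) := by field_simp
        _ ≤ x m := by simp only [x]; gcongr
    linarith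
  refine ⟨m, (Nat.ceil_lt_add_one (div_nonneg (Real.log_nonneg (by linarith)) hlogρ.le)).le,
    fun i => min 1 (x i), by simp [x], min_eq_left hxm,
    fun i j hij => min_le_min le_rfl (hx_mono hij),
    fun i => ⟨le_min zero_le_one (by simpa [x] using hx_mono (Nat.zero_le i)), min_le_left _ _⟩,
    fun i => ?_⟩
  have hxi : 0 ≤ x i := by simpa [x] using hx_mono (Nat.zero_le i)
  show min 1 (x (i + 1)) - min 1 (x i) ≤ ρ * (min 1 (x i) + a)
  rcases le_total (x i) 1 with h | h
  · rw [min_eq_right h]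
    linarith [min_le_right 1 (x (i + 1)), hx_succ i]
  · rw [min_eq_left h]
    nlinarith [min_le_left 1 (x (i + 1))]

variable {M : Set E}

/-- By concavity `δ ≥ (1 - t) d + t δ(w₀)` at the point `(1 - t) w + t w₀`, so a chain along the
segment may take steps growing geometrically in `t`. -/
lemma kobDist_le_of_convex (hM : Convex ℝ M) {w w₀ : E} (hw : w ∈ M) (hw₀ : w₀ ∈ M)
    {d R : ℝ} (hd : 0 < d) (hdw : d ≤ delta M w) (hdw₀ : 2 * d ≤ delta M w₀) (hR : 0 < R)
    (hwR : ‖w₀ - w‖ ≤ R) :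
    kobDist M w w₀ ≤
      (Real.log (delta M w₀ / d) / Real.log (1 + delta M w₀ / (4 * R)) + 1) * poincare (1 / 2) := by
  set D := delta M w₀
  have hD : 0 < D := by linarith
  obtain ⟨m, hm, t, ht0, htm, ht_mono, ht01, ht_step⟩ :=
    exists_geometric_partition (a := 2 * d / D) (ρ := D / (4 * R)) (by positivity)
      ((div_le_one hD).2 hdw₀) (by positivity)
  rw [show 2 / (2 * d / D) = D / d by field_simp] at hm
  set c : ℕ → E := fun i => (1 - t i) • w + t i • w₀
  have hcM : ∀ i, c i ∈ M := fun i =>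
    hM hw hw₀ (sub_nonneg.2 (ht01 i).2) (ht01 i).1 (by ring)
  have hδc : ∀ i, (1 - t i) * d + t i * D ≤ delta M (c i) := fun i => by
    have := (concaveOn_delta hM).2 hw hw₀ (sub_nonneg.2 (ht01 i).2) (ht01 i).1 (by ring)
    simp only [smul_eq_mul] at this
    nlinarith [ht01 i]
  have hstep : ∀ i, ‖c (i + 1) - c i‖ ≤ delta M (c i) / 2 := fun i => by
    have hc_sub : c (i + 1) - c i = (t (i + 1) - t i) • (w₀ - w) := by
      simp only [c]
      module
    have hdt : 0 ≤ t (i + 1) - t i := sub_nonneg.2 (ht_mono i.le_succ)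
    rw [hc_sub, norm_smul, Real.norm_of_nonneg hdt]
    calc (t (i + 1) - t i) * ‖w₀ - w‖ ≤ D / (4 * R) * (t i + 2 * d / D) * R := by
          refine mul_le_mul (ht_step i) hwR (norm_nonneg _) ?_
          have := (ht01 i).1
          positivity
      _ = D * t i / 4 + d / 2 := by field_simp; ring
      _ ≤ ((1 - t i) * d + t i * D) / 2 := by nlinarith [ht01 i]
      _ ≤ delta M (c i) / 2 := by linarith [hδc i]
  have hchain := kobDist_le_of_chain (c := c) (m := m) (fun i _ => hcM i)
    (fun i _ => by nlinarith [hδc i, ht01 i]) (fun i _ => hstep i)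
  simp only [c, ht0, htm, sub_zero, one_smul, zero_smul, add_zero, sub_self, zero_add] at hchain
  exact hchain.trans (by gcongr; exact poincare_half_pos.le)

/-- Apply `kobDist_le_of_convex` with `d = κ δ(w)`, where `κ = δ(w₀) / (2 (δ(w₀) + R))` is small
enough that `2 d ≤ δ(w₀)` because `δ(w) ≤ δ(w₀) + R`. -/
lemma exists_kobDist_le_add_mul_log (hM : Convex ℝ M) (hMo : IsOpen M)
    (hMb : Bornology.IsBounded M) (hMc : Mᶜ.Nonempty) {w₀ : E} (hw₀ : w₀ ∈ M) :
    ∃ α : ℝ, 0 < α ∧ ∃ β : ℝ, 0 < β ∧ ∀ w ∈ M,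
      kobDist M w w₀ ≤ α + β * Real.log (1 / delta M w) := by
  set D := delta M w₀
  have hD : 0 < D := delta_pos hMo hMc hw₀
  obtain ⟨R₀, hR₀⟩ := hMb.subset_closedBall w₀
  set R := max R₀ 1
  have hR : 1 ≤ R := le_max_right _ _
  have hc : 0 < Real.log (1 + D / (4 * R)) := Real.log_pos (lt_add_of_pos_right 1 (by positivity))
  set β := poincare (1 / 2) / Real.log (1 + D / (4 * R))
  have hβ : 0 < β := div_pos poincare_half_pos hc
  have hlogDR : 0 < Real.log (2 * (D + R)) := Real.log_pos (by linarith)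
  refine ⟨poincare (1 / 2) + β * Real.log (2 * (D + R)), by have := poincare_half_pos; positivity,
    β, hβ, fun w hw => ?_⟩
  have hδw : 0 < delta M w := delta_pos hMo hMc hw
  have hwR : ‖w₀ - w‖ ≤ R := by
    rw [← dist_eq_norm, dist_comm]
    exact (mem_closedBall.1 (hR₀ hw)).trans (le_max_left _ _)
  have hδw_le : delta M w ≤ D + R := by
    have := delta_le_delta_add_norm_sub (M := M) w₀ w
    rw [norm_sub_rev] at this
    linarith
  set d := D / (2 * (D + R)) * delta M w
  have hκ : D / (2 * (D + R)) ≤ 1 := (div_le_one (by positivity)).2 (by linarith)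
  have hd : 0 < d := by positivity
  have hdw : d ≤ delta M w := mul_le_of_le_one_left hδw.le hκ
  have hdw₀ : 2 * d ≤ D := by
    calc 2 * d ≤ 2 * (D / (2 * (D + R)) * (D + R)) := by simp only [d]; gcongr
      _ = D := by field_simp
  have hDd : Real.log (D / d) = Real.log (2 * (D + R)) + Real.log (1 / delta M w) := by
    rw [← Real.log_mul (by positivity) (by positivity)]
    congr 1
    simp only [d]
    field_simp
  calc kobDist M w w₀
      ≤ (Real.log (D / d) / Real.log (1 + D / (4 * R)) + 1) * poincare (1 / 2) :=
        kobDist_le_of_convex hM hw hw₀ hd hdw hdw₀ (by linarith) hwR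
    _ = poincare (1 / 2) + β * Real.log (2 * (D + R)) + β * Real.log (1 / delta M w) := by
        rw [hDd]
        simp only [β]
        ring

/-- Schwarz lemma for the half-plane `{Re < c}`, via the Cayley map
`ξ ↦ (ξ - a) / (ξ - b)` with `b = 2c - conj a`, which sends it into the unit disc and `a` to `0`. -/
lemma norm_deriv_le_of_re_lt {h : ℂ → ℂ} (hh : DifferentiableOn ℂ h (ball 0 1)) {c : ℝ}
    (hc : ∀ ζ ∈ ball (0 : ℂ) 1, (h ζ).re < c) : ‖deriv h 0‖ ≤ 2 * (c - (h 0).re) := by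
  set a := h 0
  have ha : a.re < c := hc 0 (mem_ball_self one_pos)
  set b : ℂ := (2 * c : ℝ) - starRingEnd ℂ a
  have hcayley : ∀ ξ : ℂ, ξ.re < c → ‖ξ - a‖ < ‖ξ - b‖ := fun ξ hξ => by
    rw [← sq_lt_sq₀ (norm_nonneg _) (norm_nonneg _), Complex.sq_norm, Complex.sq_norm,
      Complex.normSq_apply, Complex.normSq_apply]
    simp only [b, Complex.sub_re, Complex.sub_im, Complex.ofReal_re, Complex.ofReal_im,
      Complex.conj_re, Complex.conj_im]
    nlinarith
  have hb : ∀ ζ ∈ ball (0 : ℂ) 1, h ζ - b ≠ 0 := fun ζ hζ =>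
    norm_pos_iff.1 ((norm_nonneg _).trans_lt (hcayley _ (hc ζ hζ)))
  set φ : ℂ → ℂ := fun ζ => (h ζ - a) / (h ζ - b)
  have hφ : DifferentiableOn ℂ φ (ball 0 1) :=
    (hh.sub_const a).div (hh.sub_const b) hb
  have hφ_maps : MapsTo φ (ball 0 1) (closedBall (φ 0) 1) := fun ζ hζ => by
    simp only [φ, a, sub_self, zero_div, mem_closedBall, dist_zero_right, norm_div]
    exact (div_lt_one ((norm_nonneg _).trans_lt (hcayley _ (hc ζ hζ)))).2
      (hcayley _ (hc ζ hζ)) |>.le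
  have hschwarz : ‖deriv φ 0‖ ≤ 1 / 1 :=
    Complex.norm_deriv_le_div_of_mapsTo_ball hφ hφ_maps one_pos
  have hh0 : HasDerivAt h (deriv h 0) 0 :=
    (hh.differentiableAt (isOpen_ball.mem_nhds (mem_ball_self one_pos))).hasDerivAt
  have hab : a - b ≠ 0 := hb 0 (mem_ball_self one_pos)
  have hφ_deriv : deriv φ 0 = deriv h 0 / (a - b) := by
    refine ((hh0.sub_const a).div (hh0.sub_const b) hab).deriv.trans ?_
    simp only [a, sub_self, zero_mul, sub_zero]
    field_simp
  have hab_norm : ‖a - b‖ = 2 * (c - a.re) := by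
    have : a - b = ((2 * (a.re - c) : ℝ) : ℂ) := by
      apply Complex.ext <;> simp [b]; ring
    rw [this, Complex.norm_real, Real.norm_eq_abs, abs_of_neg (by linarith)]
    ring
  rw [hφ_deriv, norm_div, hab_norm, div_one, div_le_one (by linarith)] at hschwarz
  linarith

lemma dirDist_nonneg (M : Set E) (z v : E) : 0 ≤ dirDist M z v :=
  Real.sSup_nonneg fun _ hr => hr.1.le

lemma exists_notMem_of_dirDist_lt (hMb : Bornology.IsBounded M) {z v : E} (hv : ‖v‖ = 1)
    {s : ℝ} (hs : dirDist M z v < s) : ∃ ζ : ℂ, ‖ζ‖ < s ∧ z + ζ • v ∉ M := by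
  by_contra! h
  obtain ⟨R, hR⟩ := hMb.subset_closedBall z
  have hbdd : BddAbove {r : ℝ | 0 < r ∧ ∀ ζ : ℂ, ‖ζ‖ < r → z + ζ • (‖v‖⁻¹ • v) ∈ M} := by
    refine ⟨R, fun r ⟨hr, hrM⟩ => le_of_not_gt fun hRr => ?_⟩
    obtain ⟨s, hRs, hsr⟩ := exists_between (max_lt hRr hr)
    have hs0 : ‖(s : ℂ)‖ = s := by simp [(le_max_right R 0).trans hRs.le]
    have := hR (hrM s (hs0.symm ▸ hsr))
    rw [mem_closedBall, dist_eq_norm, add_sub_cancel_left, norm_smul, hv, inv_one, one_smul,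
      hs0, hv, mul_one] at this
    exact (le_max_left R 0).not_gt (hRs.trans_le this)
  refine hs.not_ge (le_csSup hbdd ⟨(dirDist_nonneg M z v).trans_lt hs, ?_⟩)
  simpa [hv] using h

/-- A real hyperplane separating `M` from the point `f 0 + ζ v` confines `f` to a half-plane in
the direction of `v`, of width `Re (ζ g v)`; the half-plane Schwarz lemma bounds `f'(0) = α⁻¹ v`. -/
lemma inv_norm_le_two_mul_norm_of_notMem (hMo : IsOpen M) (hM : Convex ℝ M) {f : ℂ → E}
    (hf : DifferentiableOn ℂ f (ball 0 1)) (hfM : MapsTo f (ball 0 1) M) {α : ℂ} {v : E}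
    (hv : α • deriv f 0 = v) {ζ : ℂ} (hζ : f 0 + ζ • v ∉ M) : ‖α‖⁻¹ ≤ 2 * ‖ζ‖ := by
  rcases eq_or_ne α 0 with rfl | hα
  · simp
  obtain ⟨g, hg⟩ := RCLike.geometric_hahn_banach_open_point (𝕜 := ℂ) hM hMo hζ
  simp only [RCLike.re_to_complex] at hg
  have hf0 : HasDerivAt f (deriv f 0) 0 :=
    (hf.differentiableAt (isOpen_ball.mem_nhds (mem_ball_self one_pos))).hasDerivAt
  have hgf : deriv (g ∘ f) 0 = α⁻¹ * g v := by
    rw [(g.hasFDerivAt.comp_hasDerivAt 0 hf0).deriv, ← hv, map_smul, smul_eq_mul,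
      inv_mul_cancel_left₀ hα]
  have hwidth : (g (f 0 + ζ • v)).re - (g (f 0)).re = (ζ * g v).re := by
    rw [map_add, map_smul, smul_eq_mul, Complex.add_re]
    ring
  have hbound := norm_deriv_le_of_re_lt (h := g ∘ f) (g.differentiable.comp_differentiableOn hf)
    (fun ξ hξ => hg _ (hfM hξ))
  rw [hgf, Function.comp_apply, hwidth, norm_mul, norm_inv] at hbound
  have hpos : 0 < (ζ * g v).re := hwidth ▸ sub_pos.2 (hg _ (hfM (mem_ball_self one_pos)))
  have hre : (ζ * g v).re ≤ ‖ζ‖ * ‖g v‖ := (Complex.re_le_norm _).trans (norm_mul _ _).le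
  have hgv : 0 < ‖g v‖ := by
    refine norm_pos_iff.2 fun h0 => ?_
    simp [h0] at hpos
  nlinarith

lemma inv_kobMetric_le_two_mul_dirDist (hMo : IsOpen M) (hM : Convex ℝ M)
    (hMb : Bornology.IsBounded M) (w : E) {v : E} (hv : ‖v‖ = 1) :
    (kobMetric M w v)⁻¹ ≤ 2 * dirDist M w v := by
  have hdisc : ∀ α : ℂ, ∀ f : ℂ → E, DifferentiableOn ℂ f (ball 0 1) →
      MapsTo f (ball 0 1) M → f 0 = w → α • deriv f 0 = v → ‖α‖⁻¹ ≤ 2 * dirDist M w v := by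
    rintro α f hf hfM rfl hαv
    refine le_of_forall_pos_lt_add fun ε hε => ?_
    obtain ⟨ζ, hζ, hζM⟩ := exists_notMem_of_dirDist_lt hMb hv (lt_add_of_pos_right _ (half_pos hε))
    linarith [inv_norm_le_two_mul_norm_of_notMem hMo hM hf hfM hαv hζM]
  rcases Set.eq_empty_or_nonempty {r : ℝ | ∃ α : ℂ, r = ‖α‖ ∧ ∃ f : ℂ → E,
      DifferentiableOn ℂ f (ball (0 : ℂ) 1) ∧ MapsTo f (ball (0 : ℂ) 1) M ∧
      f 0 = w ∧ α • deriv f 0 = v} with hS | ⟨_, α₀, rfl, f₀, hf₀, hf₀M, hf₀w, hα₀⟩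
  · rw [kobMetric, hS, Real.sInf_empty, inv_zero]
    exact mul_nonneg zero_le_two (dirDist_nonneg M w v)
  have hα_pos : ∀ α : ℂ, ∀ u : E, α • u = v → 0 < ‖α‖ := by
    rintro α u hαu
    refine norm_pos_iff.2 fun h0 => ?_
    simp [h0, ← hαu] at hv
  have hdd : 0 < 2 * dirDist M w v :=
    (inv_pos.2 (hα_pos _ _ hα₀)).trans_le (hdisc α₀ f₀ hf₀ hf₀M hf₀w hα₀)
  refine inv_le_of_inv_le₀ hdd (le_csInf ⟨_, α₀, rfl, f₀, hf₀, hf₀M, hf₀w, hα₀⟩ ?_)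
  rintro _ ⟨α, rfl, f, hf, hfM, hfw, hαv⟩
  exact inv_le_of_inv_le₀ (hα_pos _ _ hαv) (hdisc α f hf hfM hfw hαv)

/-- `r ↦ (-log r) ^ (-ν) / ν` is a continuous antiderivative on `[0, b]`. -/
lemma integrableOn_inv_mul_neg_log_rpow {ν : ℝ} (hν : 0 < ν) {b : ℝ} (hb : b < 1) :
    IntegrableOn (fun r => (r * (-Real.log r) ^ (1 + ν))⁻¹) (Ioo 0 b) := by
  set Φ : ℝ → ℝ := fun r => (-Real.log r) ^ (-ν) / ν
  have hlog : ∀ r ∈ Ioo 0 1, 0 < -Real.log r := fun r hr => neg_pos.2 (Real.log_neg hr.1 hr.2)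
  have hderiv : ∀ r ∈ Ioo 0 b, HasDerivAt Φ (r * (-Real.log r) ^ (1 + ν))⁻¹ r := by
    intro r hr
    have hx := hlog r ⟨hr.1, hr.2.trans hb⟩
    refine (((Real.hasDerivAt_log hr.1.ne').neg.rpow_const (p := -ν) (Or.inl hx.ne')).div_const
      ν).congr_deriv ?_
    rw [show -ν - 1 = -(1 + ν) by ring, Pi.neg_apply, Real.rpow_neg hx.le]
    field_simp
  have hcont : ContinuousOn Φ (Icc 0 b) := by
    intro r hr
    rcases hr.1.eq_or_lt with rfl | hr0
    · have hlim : Tendsto Φ (𝓝[>] 0) (𝓝 (Φ 0)) := by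
        have : Φ 0 = 0 := by simp [Φ, Real.zero_rpow (neg_ne_zero.2 hν.ne')]
        have h := ((tendsto_rpow_neg_atTop hν).comp
          (tendsto_neg_atBot_atTop.comp Real.tendsto_log_nhdsGT_zero)).div_const ν
        rw [zero_div] at h
        rwa [this]
      exact (continuousWithinAt_Ioi_iff_Ici.1 hlim).mono Icc_subset_Ici_self
    · have hx := hlog r ⟨hr0, hr.2.trans_lt hb⟩
      exact (((Real.continuousAt_log hr0.ne').neg.rpow_const (Or.inl hx.ne')).div_const ν)
        |>.continuousWithinAt
  have hpos : ∀ r ∈ Ioo 0 b, 0 ≤ (r * (-Real.log r) ^ (1 + ν))⁻¹ := fun r hr =>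
    inv_nonneg.2 (mul_nonneg hr.1.le (Real.rpow_nonneg (hlog r ⟨hr.1, hr.2.trans hb⟩).le _))
  exact (intervalIntegral.integrableOn_deriv_of_nonneg hcont hderiv hpos).mono_set
    Ioo_subset_Ioc_self

lemma kobMetric_nonneg (D : Set E) (z v : E) : 0 ≤ kobMetric D z v :=
  Real.sInf_nonneg fun _ ⟨α, hr, _⟩ => hr ▸ norm_nonneg α

lemma goldiSet_mono (M : Set E) : Monotone (goldiSet M) :=
  fun _ _ hrr' _ ⟨w, hw, v, hδ, hv, ht⟩ => ⟨w, hw, v, hδ.trans hrr', hv, ht⟩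

lemma sSup_goldiSet_nonneg (M : Set E) (r : ℝ) : 0 ≤ sSup (goldiSet M r) :=
  Real.sSup_nonneg fun _ ⟨w, _, v, _, _, ht⟩ => ht ▸ inv_nonneg.2 (kobMetric_nonneg M w v)

lemma le_of_mem_goldiSet (hMo : IsOpen M) (hM : Convex ℝ M) (hMb : Bornology.IsBounded M)
    (hMc : Mᶜ.Nonempty) {C p : ℝ} (hC : 0 ≤ C) (hp : 0 ≤ p)
    (hdir : ∀ z ∈ M, ∀ v : E, v ≠ 0 → dirDist M z v ≤ C / |Real.log (delta M z)| ^ p)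
    {r : ℝ} (hr0 : 0 < r) (hr1 : r < 1) {t : ℝ} (ht : t ∈ goldiSet M r) :
    t ≤ 2 * C / (-Real.log r) ^ p := by
  obtain ⟨w, hw, v, hδ, hv, rfl⟩ := ht
  have hlogr : 0 < -Real.log r := neg_pos.2 (Real.log_neg hr0 hr1)
  have hlogδ : -Real.log r ≤ |Real.log (delta M w)| :=
    (neg_le_neg (Real.log_le_log (delta_pos hMo hMc hw) hδ)).trans (neg_le_abs _)
  calc (kobMetric M w v)⁻¹ ≤ 2 * dirDist M w v := inv_kobMetric_le_two_mul_dirDist hMo hM hMb w hv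
    _ ≤ 2 * (C / |Real.log (delta M w)| ^ p) := by
        gcongr
        exact hdir w hw v (norm_pos_iff.1 (hv ▸ one_pos))
    _ ≤ 2 * (C / (-Real.log r) ^ p) := by
        have := Real.rpow_pos_of_pos hlogr p
        gcongr
    _ = 2 * C / (-Real.log r) ^ p := mul_div_assoc _ _ _ |>.symm

lemma integrableOn_sSup_goldiSet_div (hMo : IsOpen M) (hM : Convex ℝ M)
    (hMb : Bornology.IsBounded M) (hMc : Mᶜ.Nonempty) {C ν : ℝ} (hC : 0 ≤ C) (hν : 0 < ν)
    (hdir : ∀ z ∈ M, ∀ v : E, v ≠ 0 → dirDist M z v ≤ C / |Real.log (delta M z)| ^ (1 + ν))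
    {b : ℝ} (hb : b < 1) :
    (∀ r ∈ Ioo 0 b, BddAbove (goldiSet M r)) ∧
      IntegrableOn (fun r => sSup (goldiSet M r) / r) (Ioo 0 b) := by
  have hle : ∀ r ∈ Ioo 0 b, ∀ t ∈ goldiSet M r, t ≤ 2 * C / (-Real.log r) ^ (1 + ν) :=
    fun r hr t ht => le_of_mem_goldiSet hMo hM hMb hMc hC (by linarith) hdir hr.1 (hr.2.trans hb) ht
  have hbdd : ∀ r ∈ Ioo 0 b, BddAbove (goldiSet M r) := fun r hr => ⟨_, hle r hr⟩
  refine ⟨hbdd, ?_⟩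
  have hmono : MonotoneOn (fun r => sSup (goldiSet M r)) (Ioo 0 b) := by
    intro r _ r' hr' hrr'
    rcases (goldiSet M r).eq_empty_or_nonempty with h | h
    · simpa [h] using sSup_goldiSet_nonneg M r'
    · exact csSup_le_csSup (hbdd r' hr') h (goldiSet_mono M hrr')
  refine ((integrableOn_inv_mul_neg_log_rpow hν hb).const_mul (2 * C)).mono'
    ((aemeasurable_restrict_of_monotoneOn measurableSet_Ioo hmono).div
      aemeasurable_id).aestronglyMeasurable
    ((ae_restrict_iff' measurableSet_Ioo).2 (Eventually.of_forall fun r hr => ?_))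
  have hlogr : 0 < (-Real.log r) ^ (1 + ν) :=
    Real.rpow_pos_of_pos (neg_pos.2 (Real.log_neg hr.1 (hr.2.trans hb))) _
  have hsup : sSup (goldiSet M r) ≤ 2 * C / (-Real.log r) ^ (1 + ν) :=
    Real.sSup_le (hle r hr) (by positivity)
  calc ‖sSup (goldiSet M r) / r‖ = sSup (goldiSet M r) / r :=
        Real.norm_of_nonneg (div_nonneg (sSup_goldiSet_nonneg M r) hr.1.le)
    _ ≤ 2 * C / (-Real.log r) ^ (1 + ν) / r := by gcongr; exact hr.1.le
    _ = 2 * C * (r * (-Real.log r) ^ (1 + ν))⁻¹ := by field_simp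

theorem logTypeConvex_goldilocks_general {n : ℕ} (Ω : Set (Cn n))
    (hΩo : IsOpen Ω)
    (q : Cn n) (hq : q ∈ frontier Ω)
    (𝒪 : Set (Cn n)) (h𝒪o : IsOpen 𝒪)
    (hltc : LogTypeConvex (𝒪 ∩ Ω)) :
    (∃ ε : ℝ, 0 < ε ∧ (∀ r ∈ Ioo (0 : ℝ) ε, BddAbove (goldiSet (𝒪 ∩ Ω) r)) ∧
      IntegrableOn (fun r => sSup (goldiSet (𝒪 ∩ Ω) r) / r) (Ioo 0 ε)) ∧
    ∀ w₀ ∈ 𝒪 ∩ Ω, ∃ α : ℝ, 0 < α ∧ ∃ β : ℝ, 0 < β ∧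
      ∀ w ∈ 𝒪 ∩ Ω,
        kobDist (𝒪 ∩ Ω) w w₀ ≤ α + β * Real.log (1 / delta (𝒪 ∩ Ω) w) := by
  obtain ⟨hMb, hM, -, C, hC, ν, hν, hdir⟩ := hltc
  have hMo : IsOpen (𝒪 ∩ Ω) := h𝒪o.inter hΩo
  have hMc : (𝒪 ∩ Ω)ᶜ.Nonempty := ⟨q, fun hqM => (hΩo.frontier_eq ▸ hq).2 hqM.2⟩
  exact ⟨⟨1 / 2, one_half_pos,
      integrableOn_sSup_goldiSet_div hMo hM hMb hMc hC.le hν hdir one_half_lt_one⟩,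
    fun w₀ hw₀ => exists_kobDist_le_add_mul_log hM hMo hMb hMc hw₀⟩

/-- Step 1 in Proposition 5.4 of the paper. A local log-type convex
piece is a Goldilocks domain (Bharali–Zimmer). -/
theorem logTypeConvex_goldilocks {n : ℕ} (hn : 2 ≤ n) (Ω : Set (Cn n))
    (hΩo : IsOpen Ω) (hΩc : IsConnected Ω) (hΩb : Bornology.IsBounded Ω)
    (q : Cn n) (hq : q ∈ frontier Ω)
    (𝒪 : Set (Cn n)) (h𝒪o : IsOpen 𝒪) (hq𝒪 : q ∈ 𝒪)
    (hltc : LogTypeConvex (𝒪 ∩ Ω)) :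
    (∃ ε : ℝ, 0 < ε ∧ (∀ r ∈ Ioo (0 : ℝ) ε, BddAbove (goldiSet (𝒪 ∩ Ω) r)) ∧
      IntegrableOn (fun r => sSup (goldiSet (𝒪 ∩ Ω) r) / r) (Ioo 0 ε)) ∧
    ∀ w₀ ∈ 𝒪 ∩ Ω, ∃ α : ℝ, 0 < α ∧ ∃ β : ℝ, 0 < β ∧
      ∀ w ∈ 𝒪 ∩ Ω,
        kobDist (𝒪 ∩ Ω) w w₀ ≤ α + β * Real.log (1 / delta (𝒪 ∩ Ω) w) :=
  logTypeConvex_goldilocks_general Ω hΩo q hq 𝒪 h𝒪o hltc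

end Paper
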